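/- arXiv:2405.08943 — 6 statements merged into one kernel-verified Lean document; each statement's English description precedes it below -/
import Mathlib

section
/- In the middle order P_n, v is covered by w if and only if I(w) = I(v) + e_i for some standard basis vector e_i; equivalently, w is obtained from v by swapping a value i with the rightmost value j < i appearing to the left of i in v such that no value smaller than i lies between them. -/
/-- The inversion sequence of a permutation `w` of `Fin n` (0-indexed values):
`invSeq w i` counts the values `j < i` appearing after `i` in one-line notation. -/
def invSeq {n : ℕ} (w : Equiv.Perm (Fin n)) (i : Fin n) : ℕ :=
  (Finset.univ.filter (fun j : Fin n => j < i ∧ w.symm i < w.symm j)).card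

/-- The middle order on permutations: coordinate-wise comparison of inversion sequences. -/
def midLe {n : ℕ} (v w : Equiv.Perm (Fin n)) : Prop :=
  ∀ i, invSeq v i ≤ invSeq w i

/-- `v` is covered by `w` in the middle order. -/
def midCovBy {n : ℕ} (v w : Equiv.Perm (Fin n)) : Prop :=
  midLe v w ∧ v ≠ w ∧ ∀ u, midLe v u → midLe u w → u = v ∨ u = w

/-!
Since `I(w)_i ≤ i`, the inversion sequence maps `S_n` into `∏ i, {0, …, i}`. It is injective:
`I(w)_i` counts the positions right of `w⁻¹(i)` not occupied by values above `i`, so, going down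
from the largest value, it pins down the position of `i` once those of the larger values are known.
Both sides have `n!` elements, so `P_n` is isomorphic to a product of chains, whose covers raise a
single coordinate by one. Swapping `i` with the nearest value `j < i` to its left that has no value
below `i` in between reverses the pair `j, i` and nothing else in the pattern of the values `≤ i`,
while a larger value only sees two smaller values exchanged; so it raises `I(v)_i` alone, and by
injectivity it is the only way to do so.
-/

open Finset Equiv

variable {n : ℕ}

lemma invSeq_le (w : Perm (Fin n)) (i : Fin n) : invSeq w i ≤ i := by
  calc invSeq w i ≤ #({j | j < i} : Finset (Fin n)) :=
        card_le_card (monotone_filter_right _ fun _ _ h => h.1)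
    _ = i := by rw [filter_gt_eq_Iio, Fin.card_Iio]

lemma invSeq_eq_card_filter_Ioi (w : Perm (Fin n)) (i : Fin n) :
    invSeq w i = #{x ∈ Ioi (w.symm i) | w x < i} :=
  card_equiv w.symm fun j => by simp [and_comm]

lemma invSeq_lt_invSeq_of_symm_lt {v w : Perm (Fin n)} {i : Fin n}
    (hgt : ∀ l, i < l → v.symm l = w.symm l) (hlt : v.symm i < w.symm i) :
    invSeq w i < invSeq v i := by
  have hsmall : ∀ x, x ≠ v.symm i → w x ≤ i → v x < i := by
    intro x hx hwx
    refine lt_of_le_of_ne (not_lt.1 fun hvx => ?_) fun hvx => hx (v.eq_symm_apply.2 hvx)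
    have hwv : w x = v x := (w.symm_apply_eq.1 (by rw [← hgt _ hvx, symm_apply_apply])).symm
    exact hwx.not_gt (hwv ▸ hvx)
  rw [invSeq_eq_card_filter_Ioi, invSeq_eq_card_filter_Ioi]
  refine card_lt_card ((ssubset_iff_of_subset fun x hx => ?_).2 ⟨w.symm i, ?_, ?_⟩)
  · simp only [mem_filter, mem_Ioi] at hx ⊢
    exact ⟨hlt.trans hx.1, hsmall x (hlt.trans hx.1).ne' hx.2.le⟩
  · simpa [hlt] using hsmall _ hlt.ne' (by simp)
  · simp

lemma symm_eq_of_invSeq_eq {v w : Perm (Fin n)} {i : Fin n}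
    (hgt : ∀ l, i < l → v.symm l = w.symm l) (h : invSeq v i = invSeq w i) :
    v.symm i = w.symm i := by
  by_contra hne
  rcases lt_or_gt_of_ne hne with hlt | hlt
  · exact (invSeq_lt_invSeq_of_symm_lt hgt hlt).ne h.symm
  · exact (invSeq_lt_invSeq_of_symm_lt (fun l hl => (hgt l hl).symm) hlt).ne h

lemma invSeq_injective : Function.Injective (invSeq (n := n)) := by
  intro v w h
  suffices v.symm = w.symm from symm_bijective.injective this
  ext1 i
  induction i using WellFoundedGT.induction with
  | _ i ih => exact symm_eq_of_invSeq_eq ih (congrFun h i)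

/-- `invSeq w` as a point of the product of chains `∏ i, [0, i]`, where `midLe` becomes the
product order. -/
def invSeqFin (w : Perm (Fin n)) (i : Fin n) : Fin (i + 1) :=
  ⟨invSeq w i, Nat.lt_succ_of_le (invSeq_le w i)⟩

lemma invSeqFin_bijective : Function.Bijective (invSeqFin (n := n)) := by
  refine (Fintype.bijective_iff_injective_and_card _).2 ⟨fun v w h => invSeq_injective ?_, ?_⟩
  · exact funext fun i => congrArg Fin.val (congrFun h i)
  · simp only [Fintype.card_perm, Fintype.card_pi, Fintype.card_fin]
    rw [Fin.prod_univ_eq_prod_range (· + 1) n, prod_range_add_one_eq_factorial]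

lemma midCovBy_iff_covBy_invSeqFin {v w : Perm (Fin n)} :
    midCovBy v w ↔ invSeqFin v ⋖ invSeqFin w := by
  rw [covBy_iff_lt_and_eq_or_eq, lt_iff_le_and_ne, invSeqFin_bijective.1.ne_iff,
    ← (Equiv.ofBijective _ invSeqFin_bijective).forall_congr_right]
  simp only [Equiv.ofBijective_apply, invSeqFin_bijective.1.eq_iff, and_assoc]
  rfl

lemma invSeqFin_covBy_iff {v w : Perm (Fin n)} :
    invSeqFin v ⋖ invSeqFin w ↔
      ∃ i, ∀ j, invSeq w j = invSeq v j + if j = i then 1 else 0 := by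
  simp only [Pi.covBy_iff, Fin.covBy_iff, Nat.covBy_iff_add_one_eq, invSeqFin, Fin.mk.injEq]
  refine exists_congr fun i => ⟨fun ⟨hi, hj⟩ j => ?_, fun h => ⟨?_, fun j hj => ?_⟩⟩
  · split_ifs with hji
    · exact hji ▸ hi.symm
    · exact (hj j hji).symm
  · simpa using (h i).symm
  · simpa [hj] using (h j).symm

lemma symm_swap_mul_apply {α : Type*} [DecidableEq α] (v : Perm α) (i j x : α) :
    (swap i j * v).symm x = v.symm (swap i j x) :=
  rfl

section Swap

variable {v : Perm (Fin n)} {i j : Fin n} (hji : j < i) (hpos : v.symm j < v.symm i)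
  (hbet : ∀ k : Fin n, k < i → v.symm j < v.symm k → v.symm k < v.symm i → False)
include hpos hbet

lemma symm_lt_symm_left_iff {k : Fin n} (hki : k < i) (hkj : k ≠ j) :
    v.symm k < v.symm j ↔ v.symm k < v.symm i := by
  refine ⟨fun h => h.trans hpos, fun h => lt_of_le_of_ne ?_ (v.symm.injective.ne hkj)⟩
  exact not_lt.1 fun hjk => hbet k hki hjk h

lemma symm_lt_symm_right_iff {k : Fin n} (hki : k < i) (hkj : k ≠ j) :
    v.symm j < v.symm k ↔ v.symm i < v.symm k := by
  have hki' : v.symm k ≠ v.symm i := v.symm.injective.ne hki.ne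
  rw [← not_iff_not, not_lt, not_lt, le_iff_lt_or_eq, le_iff_lt_or_eq,
    symm_lt_symm_left_iff hpos hbet hki hkj]
  simp [hki', v.symm.injective.ne hkj]

include hji

lemma invSeq_swap_mul_self : invSeq (swap i j * v) i = invSeq v i + 1 := by
  rw [invSeq, invSeq, ← card_insert_of_notMem (a := j) (by simp [hpos.not_gt])]
  congr 1
  ext l
  simp only [symm_swap_mul_apply, swap_apply_left, mem_filter, mem_univ, true_and, mem_insert]
  rcases eq_or_ne l j with rfl | hlj
  · simp [hji, hpos]
  rcases eq_or_ne l i with rfl | hli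
  · simp [hlj]
  rw [swap_apply_of_ne_of_ne hli hlj, or_iff_right hlj]
  exact and_congr_right fun hli => symm_lt_symm_right_iff hpos hbet hli hlj

lemma invSeq_swap_mul_of_ne {m : Fin n} (hmi : m ≠ i) :
    invSeq (swap i j * v) m = invSeq v m := by
  rcases lt_or_gt_of_ne hmi with hmi | hmi
  · refine congrArg card (filter_congr fun l _ => and_congr_right fun hlm => ?_)
    have hli : l < i := hlm.trans hmi
    simp only [symm_swap_mul_apply]
    rcases eq_or_ne m j with rfl | hmj
    · rw [swap_apply_right, swap_apply_of_ne_of_ne hli.ne hlm.ne]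
      exact (symm_lt_symm_right_iff hpos hbet hli hlm.ne).symm
    rw [swap_apply_of_ne_of_ne hmi.ne hmj]
    rcases eq_or_ne l j with rfl | hlj
    · rw [swap_apply_right]
      exact (symm_lt_symm_left_iff hpos hbet hmi hmj).symm
    · rw [swap_apply_of_ne_of_ne hli.ne hlj]
  · have hjm : j < m := hji.trans hmi
    refine card_equiv (swap i j) fun l => ?_
    simp only [mem_filter, mem_univ, true_and, symm_swap_mul_apply,
      swap_apply_of_ne_of_ne hmi.ne' hjm.ne']
    refine and_congr_left fun _ => ?_
    rw [swap_apply_def]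
    split_ifs with hli hlj
    · simp [hli, hmi, hjm]
    · simp [hlj, hmi, hjm]
    · rfl

lemma invSeq_swap_mul (m : Fin n) :
    invSeq (swap i j * v) m = invSeq v m + if m = i then 1 else 0 := by
  split_ifs with hmi
  · subst hmi
    exact invSeq_swap_mul_self hji hpos hbet
  · exact invSeq_swap_mul_of_ne hji hpos hbet hmi

end Swap

lemma exists_lt_symm_lt_of_invSeq_lt {v : Perm (Fin n)} {i : Fin n} (h : invSeq v i < i) :
    ∃ j < i, v.symm j < v.symm i := by
  rw [invSeq, ← Fin.card_Iio] at h
  obtain ⟨j, hj, hjv⟩ := exists_mem_notMem_of_card_lt_card h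
  rw [mem_Iio] at hj
  simp only [mem_filter, mem_univ, true_and, hj, not_lt] at hjv
  exact ⟨j, hj, lt_of_le_of_ne hjv (v.symm.injective.ne hj.ne)⟩

lemma exists_nearest_smaller_left {v : Perm (Fin n)} {i : Fin n}
    (h : ∃ j < i, v.symm j < v.symm i) :
    ∃ j, j < i ∧ v.symm j < v.symm i ∧
      ∀ k : Fin n, k < i → v.symm j < v.symm k → v.symm k < v.symm i → False := by
  obtain ⟨j₀, hj₀i, hj₀⟩ := h
  obtain ⟨j, hj, hmax⟩ := exists_max_image {j | j < i ∧ v.symm j < v.symm i} v.symm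
    ⟨j₀, by simp [hj₀i, hj₀]⟩
  simp only [mem_filter, mem_univ, true_and] at hj hmax
  exact ⟨j, hj.1, hj.2, fun k hki hjk hki' => (hmax k ⟨hki, hki'⟩).not_gt hjk⟩

lemma exists_invSeq_eq_add_ite_iff {v w : Perm (Fin n)} :
    (∃ i, ∀ m, invSeq w m = invSeq v m + if m = i then 1 else 0) ↔
      ∃ i j : Fin n, j < i ∧ v.symm j < v.symm i ∧
        (∀ k : Fin n, k < i → v.symm j < v.symm k → v.symm k < v.symm i → False) ∧
        w = swap i j * v := by
  constructor
  · rintro ⟨i, h⟩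
    have hlt : invSeq v i < i := by
      have := invSeq_le w i
      rw [h i, if_pos rfl] at this
      omega
    obtain ⟨j, hji, hpos, hbet⟩ :=
      exists_nearest_smaller_left (exists_lt_symm_lt_of_invSeq_lt hlt)
    refine ⟨i, j, hji, hpos, hbet, invSeq_injective (funext fun m => ?_)⟩
    rw [h m, invSeq_swap_mul hji hpos hbet]
  · rintro ⟨i, j, hji, hpos, hbet, rfl⟩
    exact ⟨i, invSeq_swap_mul hji hpos hbet⟩

/-- Covers in the middle order: `v ⋖ w` iff `I(w) = I(v) + e_i` for some `i`;
equivalently `w` is obtained from `v` by swapping a value `i` with the rightmost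
value `j < i` to its left such that no value smaller than `i` lies between them. -/
theorem middle_order_covers (n : ℕ) (v w : Equiv.Perm (Fin n)) :
    (midCovBy v w ↔
      ∃ i : Fin n, ∀ j : Fin n,
        invSeq w j = invSeq v j + (if j = i then 1 else 0)) ∧
    (midCovBy v w ↔
      ∃ i j : Fin n, j < i ∧ v.symm j < v.symm i ∧
        (∀ k : Fin n, k < i → v.symm j < v.symm k → v.symm k < v.symm i → False) ∧
        w = Equiv.swap i j * v) := by
  have hcov := (midCovBy_iff_covBy_invSeqFin (v := v) (w := w)).trans invSeqFin_covBy_iff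
  exact ⟨hcov, hcov.trans exists_invSeq_eq_add_ite_iff⟩
end

section
/- The middle order on S_n refines the weak (right) order and is refined by the Bruhat order: if v ≤ w in the weak order then v ≤ w in the middle order, and if v ≤ w in the middle order then v ≤ w in the Bruhat order. -/
/-- Number of inversions of a permutation. -/
def inversions {n : ℕ} (w : Equiv.Perm (Fin n)) : ℕ :=
  (Finset.univ.filter (fun p : Fin n × Fin n => p.1 < p.2 ∧ w p.2 < w p.1)).card

/-- The (right) weak order on `S_n`: generated by covers turning an ascent into a
descent via an adjacent transposition of positions. -/
def weakLe {n : ℕ} : Equiv.Perm (Fin n) → Equiv.Perm (Fin n) → Prop :=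
  Relation.ReflTransGen (fun v w => ∃ i : Fin n, ∃ h : (i : ℕ) + 1 < n,
    v i < v ⟨(i : ℕ) + 1, h⟩ ∧ w = v * Equiv.swap i ⟨(i : ℕ) + 1, h⟩)

/-- The Bruhat order on `S_n`: generated by covers transposing two entries forming a
non-inversion and increasing the inversion count by exactly one. -/
def bruhatLe {n : ℕ} : Equiv.Perm (Fin n) → Equiv.Perm (Fin n) → Prop :=
  Relation.ReflTransGen (fun v w => ∃ i j : Fin n, i < j ∧ v i < v j ∧
    w = v * Equiv.swap i j ∧ inversions w = inversions v + 1)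

section Aux

open Finset Equiv

variable {n : ℕ}

/-- symm of a product with a swap. -/
lemma symm_mul_swap (v : Equiv.Perm (Fin n)) (i jp : Fin n) (x : Fin n) :
    (v * Equiv.swap i jp).symm x = Equiv.swap i jp (v.symm x) := by
  simp [Equiv.Perm.mul_def, Equiv.symm_trans_apply]

/-- Adjacent swaps preserve strict order except at the swapped pair. -/
lemma swap_adj_lt {i i' p q : Fin n} (hii : (i' : ℕ) = (i : ℕ) + 1) (hpq : p < q)
    (hbad : ¬(p = i ∧ q = i')) : Equiv.swap i i' p < Equiv.swap i i' q := by
  have hii' : i < i' := by rw [Fin.lt_def]; omega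
  by_cases hp1 : p = i
  · subst hp1
    have hq : q ≠ i' := fun h => hbad ⟨rfl, h⟩
    have hq2 : q ≠ p := (ne_of_gt hpq)
    rw [Equiv.swap_apply_left, Equiv.swap_apply_of_ne_of_ne hq2 hq]
    have hne := Fin.val_ne_iff.mpr hq
    rw [Fin.lt_def] at hpq ⊢
    rw [Fin.lt_def] at hii'
    omega
  · by_cases hp2 : p = i'
    · subst hp2
      have hq1 : q ≠ i := ne_of_gt (lt_trans hii' hpq)
      have hq2 : q ≠ p := ne_of_gt hpq
      rw [Equiv.swap_apply_right, Equiv.swap_apply_of_ne_of_ne hq1 hq2]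
      exact lt_trans hii' hpq
    · rw [Equiv.swap_apply_of_ne_of_ne hp1 hp2]
      by_cases hq1 : q = i
      · subst hq1
        rw [Equiv.swap_apply_left]
        exact lt_trans hpq hii'
      · by_cases hq2 : q = i'
        · subst hq2
          rw [Equiv.swap_apply_right]
          have : p < i := lt_of_le_of_ne (by rw [Fin.le_def]; rw [Fin.lt_def] at hpq; omega)
            hp1
          exact this
        · rw [Equiv.swap_apply_of_ne_of_ne hq1 hq2]
          exact hpq

/-- A single weak-order cover is a middle-order relation. -/
lemma weak_step_mid {v w : Equiv.Perm (Fin n)} (i : Fin n) (h : (i : ℕ) + 1 < n)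
    (hasc : v i < v ⟨(i : ℕ) + 1, h⟩) (hw : w = v * Equiv.swap i ⟨(i : ℕ) + 1, h⟩) :
    midLe v w := by
  set i' : Fin n := ⟨(i : ℕ) + 1, h⟩ with hi'
  intro c
  apply Finset.card_le_card
  intro j hj
  simp only [Finset.mem_filter, Finset.mem_univ, true_and] at hj ⊢
  refine ⟨hj.1, ?_⟩
  rw [hw, symm_mul_swap, symm_mul_swap]
  apply swap_adj_lt rfl hj.2
  rintro ⟨h1, h2⟩
  have hc : c = v i := by rw [← h1]; simp
  have hjv : j = v i' := by rw [← h2]; simp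
  rw [hc, hjv] at hj
  exact absurd hasc (not_lt.mpr (le_of_lt hj.1))

lemma invSeq_le_val (v : Equiv.Perm (Fin n)) (b : Fin n) : invSeq v b ≤ (b : ℕ) := by
  rw [← Fin.card_Iio b]
  apply Finset.card_le_card
  intro j hj
  simp only [Finset.mem_filter, Finset.mem_univ, true_and] at hj
  exact Finset.mem_Iio.mpr hj.1

/-- Sum of the inversion sequence equals the number of inversions. -/
lemma sum_invSeq (v : Equiv.Perm (Fin n)) : ∑ b, invSeq v b = inversions v := by
  classical
  have h1 : inversions v =
      ((Finset.univ : Finset (Fin n × Fin n)).filter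
        (fun p => p.2 < p.1 ∧ v.symm p.1 < v.symm p.2)).card := by
    unfold inversions
    apply Finset.card_nbij' (fun p => (v p.1, v p.2)) (fun q => (v.symm q.1, v.symm q.2))
    · intro p hp
      simp only [Finset.mem_coe, Finset.mem_filter, Finset.mem_univ, true_and] at hp ⊢
      constructor
      · exact hp.2
      · simpa using hp.1
    · intro q hq
      simp only [Finset.mem_coe, Finset.mem_filter, Finset.mem_univ, true_and] at hq ⊢
      constructor
      · exact hq.2
      · simpa using hq.1
    · intro p _; simp
    · intro q _; simp
  rw [h1]
  rw [Finset.card_eq_sum_card_fiberwise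
    (f := fun p : Fin n × Fin n => p.1) (t := Finset.univ) (fun x _ => Finset.mem_univ _)]
  apply Finset.sum_congr rfl
  intro b _
  unfold invSeq
  apply Finset.card_nbij' (fun j => (b, j)) (fun p => p.2)
  · intro j hj
    simp only [Finset.mem_coe, Finset.mem_filter, Finset.mem_univ, true_and] at hj ⊢
    exact ⟨⟨hj.1, hj.2⟩, trivial⟩
  · intro p hp
    simp only [Finset.mem_coe, Finset.mem_filter, Finset.mem_univ, true_and] at hp ⊢
    obtain ⟨⟨h1, h2⟩, h3⟩ := hp
    subst h3
    exact ⟨h1, h2⟩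
  · intro j _; rfl
  · intro p hp
    simp only [Finset.mem_coe, Finset.mem_filter, Finset.mem_univ, true_and] at hp
    rw [← hp.2]

/-- Characterization: value `j < b` lies after `b` iff its right-rank among values `< b`
is at most `invSeq v b`. -/
lemma claimA (v : Equiv.Perm (Fin n)) (b j : Fin n) (hj : j < b) :
    (v.symm b < v.symm j ↔
      (Finset.univ.filter (fun k : Fin n => k < b ∧ v.symm j ≤ v.symm k)).card ≤ invSeq v b) := by
  constructor
  · intro h
    apply Finset.card_le_card
    intro k hk
    simp only [Finset.mem_filter, Finset.mem_univ, true_and] at hk ⊢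
    exact ⟨hk.1, lt_of_lt_of_le h hk.2⟩
  · intro h
    by_contra hc
    have hne : v.symm j ≠ v.symm b := fun e => absurd (v.symm.injective e) (ne_of_lt hj)
    have hlt : v.symm j < v.symm b := lt_of_le_of_ne (not_lt.mp hc) hne
    have hss : (Finset.univ.filter (fun k : Fin n => k < b ∧ v.symm b < v.symm k)) ⊂
        (Finset.univ.filter (fun k : Fin n => k < b ∧ v.symm j ≤ v.symm k)) := by
      constructor
      · intro k hk
        simp only [Finset.mem_filter, Finset.mem_univ, true_and] at hk ⊢
        exact ⟨hk.1, le_of_lt (lt_trans hlt hk.2)⟩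
      · intro h2
        have hjmem : j ∈ (Finset.univ.filter (fun k : Fin n => k < b ∧ v.symm j ≤ v.symm k)) := by
          simp only [Finset.mem_filter, Finset.mem_univ, true_and]
          exact ⟨hj, le_refl _⟩
        have := h2 hjmem
        simp only [Finset.mem_filter, Finset.mem_univ, true_and] at this
        exact absurd this.2 (not_lt.mpr (le_of_lt hlt))
    have := Finset.card_lt_card hss
    unfold invSeq at h
    omega

/-- Flip an iff of strict inequalities given distinctness. -/
lemma flip_iff {α : Type*} [LinearOrder α] {a b c d : α} (h : a < b ↔ c < d)
    (h1 : a ≠ b) (h2 : c ≠ d) : b < a ↔ d < c := by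
  constructor
  · intro hl
    by_contra hcon
    have : c < d := lt_of_le_of_ne (not_lt.mp hcon) h2
    exact absurd (h.mpr this) (asymm hl)
  · intro hl
    by_contra hcon
    have : a < b := lt_of_le_of_ne (not_lt.mp hcon) h1
    exact absurd (h.mp this) (asymm hl)

/-- The inversion sequence determines the permutation. -/
lemma invSeq_inj {v w : Equiv.Perm (Fin n)} (h : ∀ b, invSeq v b = invSeq w b) : v = w := by
  have key : ∀ m : ℕ, ∀ b : Fin n, (b : ℕ) = m → ∀ a : Fin n, a < b →
      (v.symm a < v.symm b ↔ w.symm a < w.symm b) := by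
    intro m
    induction m using Nat.strong_induction_on with
    | _ m ih =>
      intro b hbm a hab
      have pairIff : ∀ x y : Fin n, x < b → y < b →
          (v.symm x < v.symm y ↔ w.symm x < w.symm y) := by
        intro x y hx hy
        rcases lt_trichotomy x y with hxy | rfl | hyx
        · exact ih y.val (by rw [← hbm]; exact hy) y rfl x hxy
        · simp
        · have h1 := ih x.val (by rw [← hbm]; exact hx) x rfl y hyx
          refine flip_iff h1 ?_ ?_
          · exact fun e => absurd (v.symm.injective e) (ne_of_lt hyx)
          · exact fun e => absurd (w.symm.injective e) (ne_of_lt hyx)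
      have hfil :
          (Finset.univ.filter (fun k : Fin n => k < b ∧ v.symm a ≤ v.symm k)) =
          (Finset.univ.filter (fun k : Fin n => k < b ∧ w.symm a ≤ w.symm k)) := by
        ext k
        simp only [Finset.mem_filter, Finset.mem_univ, true_and]
        constructor
        · rintro ⟨hk, hle⟩
          refine ⟨hk, ?_⟩
          rcases eq_or_ne k a with rfl | hka
          · exact le_refl _
          · have hlt : v.symm a < v.symm k :=
              lt_of_le_of_ne hle (fun e => hka (v.symm.injective e.symm))
            exact le_of_lt ((pairIff a k hab hk).mp hlt)
        · rintro ⟨hk, hle⟩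
          refine ⟨hk, ?_⟩
          rcases eq_or_ne k a with rfl | hka
          · exact le_refl _
          · have hlt : w.symm a < w.symm k :=
              lt_of_le_of_ne hle (fun e => hka (w.symm.injective e.symm))
            exact le_of_lt ((pairIff a k hab hk).mpr hlt)
      have hA := claimA v b a hab
      have hB := claimA w b a hab
      rw [hfil, h b] at hA
      have hflip : v.symm b < v.symm a ↔ w.symm b < w.symm a := hA.trans hB.symm
      refine flip_iff hflip ?_ ?_
      · exact fun e => absurd (v.symm.injective e) (ne_of_gt hab)
      · exact fun e => absurd (w.symm.injective e) (ne_of_gt hab)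
  have key2 : ∀ a b : Fin n, a < b → (v.symm a < v.symm b ↔ w.symm a < w.symm b) :=
    fun a b hab => key b.val b rfl a hab
  set g : Equiv.Perm (Fin n) := w.trans v.symm with hg
  have hmono : StrictMono g := by
    intro x y hxy
    show v.symm (w x) < v.symm (w y)
    rcases lt_trichotomy (w x) (w y) with h1 | h1 | h1
    · exact (key2 _ _ h1).mpr (by simpa using hxy)
    · exact absurd (w.injective h1) (ne_of_lt hxy)
    · have := (key2 _ _ h1)
      have h2 : ¬ w.symm (w y) < w.symm (w x) := by simpa using not_lt.mpr (le_of_lt hxy)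
      have h3 : ¬ v.symm (w y) < v.symm (w x) := fun hc => h2 (this.mp hc)
      have hne : v.symm (w x) ≠ v.symm (w y) :=
        fun e => absurd (w.injective (v.symm.injective e)) (ne_of_lt hxy)
      exact lt_of_le_of_ne (not_lt.mp h3) hne
  have hid : ∀ x, g x = x := by
    have e : (StrictMono.orderIsoOfSurjective _ hmono g.surjective : Fin n ≃o Fin n) =
        OrderIso.refl _ := Subsingleton.elim _ _
    intro x
    have := congrArg (fun f : Fin n ≃o Fin n => f x) e
    simpa using this
  apply Equiv.ext
  intro x
  have := hid x
  have h2 : v.symm (w x) = x := this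
  calc v x = v (v.symm (w x)) := by rw [h2]
    _ = w x := by simp

/-- The key covering step: if `invSeq v b` is not maximal, we can perform a Bruhat cover
raising `invSeq` exactly at coordinate `b`. -/
lemma step_lemma (v : Equiv.Perm (Fin n)) (b : Fin n) (hlt : invSeq v b < (b : ℕ)) :
    ∃ v' : Equiv.Perm (Fin n), (∃ i j : Fin n, i < j ∧ v i < v j ∧ v' = v * Equiv.swap i j) ∧
      (∀ c, invSeq v' c = if c = b then invSeq v b + 1 else invSeq v c) := by
  classical
  -- the set of values < b positioned before b
  set T := Finset.univ.filter (fun j : Fin n => j < b ∧ v.symm j < v.symm b) with hT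
  have hTne : T.Nonempty := by
    by_contra hemp
    rw [Finset.not_nonempty_iff_eq_empty] at hemp
    have hge : (b : ℕ) ≤ invSeq v b := by
      rw [← Fin.card_Iio b]
      apply Finset.card_le_card
      intro j hj
      have hjb : j < b := Finset.mem_Iio.mp hj
      simp only [Finset.mem_filter, Finset.mem_univ, true_and]
      refine ⟨hjb, ?_⟩
      have h1 : ¬ (j < b ∧ v.symm j < v.symm b) := by
        have := Finset.filter_eq_empty_iff.mp (hT ▸ hemp) (Finset.mem_univ j)
        exact this
      have hne : v.symm b ≠ v.symm j := fun e => absurd (v.symm.injective e) (ne_of_lt hjb).symm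
      rcases lt_trichotomy (v.symm b) (v.symm j) with h | h | h
      · exact h
      · exact absurd h hne
      · exact absurd ⟨hjb, h⟩ h1
    omega
  obtain ⟨a, haT, hamax⟩ := T.exists_max_image (fun j => v.symm j) hTne
  simp only [hT, Finset.mem_filter, Finset.mem_univ, true_and] at haT
  obtain ⟨hab, hposab⟩ := haT
  set i := v.symm a with hi
  set jp := v.symm b with hjp
  have hij : i < jp := hposab
  have hvi : v i = a := by simp [hi]
  have hvjp : v jp = b := by simp [hjp]
  -- gap property
  have gap : ∀ c : Fin n, i < v.symm c → v.symm c < jp → b < c := by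
    intro c h1 h2
    by_contra hbc
    push_neg at hbc
    have hcb : c ≠ b := fun e => absurd (e ▸ h2) (lt_irrefl _)
    have hcb' : c < b := lt_of_le_of_ne hbc hcb
    have hcT : c ∈ T := by
      simp only [hT, Finset.mem_filter, Finset.mem_univ, true_and]
      exact ⟨hcb', h2⟩
    exact absurd (hamax c hcT) (not_le.mpr h1)
  have side : ∀ c : Fin n, c < b → c ≠ a → (v.symm c < i ∨ jp < v.symm c) := by
    intro c hcb hca
    have h1 : v.symm c ≠ i := fun e => hca (v.symm.injective e)
    have h2 : v.symm c ≠ jp := fun e => absurd (v.symm.injective e) (ne_of_lt hcb)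
    rcases lt_trichotomy (v.symm c) i with h | h | h
    · exact Or.inl h
    · exact absurd h h1
    · rcases lt_trichotomy (v.symm c) jp with h' | h' | h'
      · exact absurd (gap c h h') (not_lt.mpr (le_of_lt hcb))
      · exact absurd h' h2
      · exact Or.inr h'
  refine ⟨v * Equiv.swap i jp, ⟨i, jp, hij, by rw [hvi, hvjp]; exact hab, rfl⟩, ?_⟩
  set v' := v * Equiv.swap i jp with hv'
  have hpos' : ∀ x, v'.symm x = Equiv.swap i jp (v.symm x) := fun x => symm_mul_swap v i jp x
  have hijne : i ≠ jp := ne_of_lt hij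
  have habne : a ≠ b := ne_of_lt hab
  have hswapfix : ∀ x : Fin n, x ≠ a → x ≠ b → Equiv.swap i jp (v.symm x) = v.symm x := by
    intro x hxa hxb
    apply Equiv.swap_apply_of_ne_of_ne
    · exact fun e => hxa (v.symm.injective e)
    · exact fun e => hxb (v.symm.injective e)
  have hsa : Equiv.swap i jp (v.symm a) = jp := by rw [← hi, Equiv.swap_apply_left]
  have hsb : Equiv.swap i jp (v.symm b) = i := by rw [← hjp, Equiv.swap_apply_right]
  intro c
  by_cases hcb : c = b
  · subst hcb
    rw [if_pos rfl]
    unfold invSeq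
    have hset : (Finset.univ.filter (fun j : Fin n => j < c ∧ v'.symm c < v'.symm j)) =
        insert a (Finset.univ.filter (fun j : Fin n => j < c ∧ v.symm c < v.symm j)) := by
      ext j
      simp only [Finset.mem_insert, Finset.mem_filter, Finset.mem_univ, true_and, hpos', hsb]
      constructor
      · rintro ⟨hjc, hlt⟩
        by_cases hja : j = a
        · exact Or.inl hja
        · right
          refine ⟨hjc, ?_⟩
          rw [hswapfix j hja (ne_of_lt hjc)] at hlt
          rcases side j hjc hja with h | h
          · exact absurd hlt (not_lt.mpr (le_of_lt h))
          · exact h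
      · rintro (rfl | ⟨hjc, hlt⟩)
        · exact ⟨hab, by rw [hsa]; exact hij⟩
        · have hja : j ≠ a := by
            intro e; subst e
            rw [← hi] at hlt
            exact absurd hlt (not_lt.mpr (le_of_lt hij))
          refine ⟨hjc, ?_⟩
          rw [hswapfix j hja (ne_of_lt hjc)]
          rw [← hjp] at hlt
          exact lt_trans hij hlt
    rw [hset, Finset.card_insert_of_notMem]
    simp only [Finset.mem_filter, Finset.mem_univ, true_and, not_and]
    intro _
    rw [← hjp, ← hi]
    exact not_lt.mpr (le_of_lt hij)
  · rw [if_neg hcb]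
    unfold invSeq
    by_cases hca : c = a
    · subst hca
      congr 1
      ext j
      simp only [Finset.mem_filter, Finset.mem_univ, true_and, hpos', hsa]
      constructor
      · rintro ⟨hjc, hlt⟩
        refine ⟨hjc, ?_⟩
        have hja : j ≠ c := ne_of_lt hjc
        have hjb : j ≠ b := ne_of_lt (lt_trans hjc hab)
        rw [hswapfix j hja hjb] at hlt
        rw [← hi]
        exact lt_trans hij hlt
      · rintro ⟨hjc, hlt⟩
        refine ⟨hjc, ?_⟩
        have hja : j ≠ c := ne_of_lt hjc
        have hjb : j ≠ b := ne_of_lt (lt_trans hjc hab)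
        rw [hswapfix j hja hjb]
        rw [← hi] at hlt
        rcases side j (lt_trans hjc hab) hja with h | h
        · exact absurd hlt (not_lt.mpr (le_of_lt h))
        · exact h
    · -- c ∉ {a, b}
      have hpc1 : v.symm c ≠ i := fun e => hca (v.symm.injective e)
      have hpc2 : v.symm c ≠ jp := fun e => hcb (v.symm.injective e)
      have hfix : Equiv.swap i jp (v.symm c) = v.symm c := hswapfix c hca hcb
      by_cases hbet : i < v.symm c ∧ v.symm c < jp
      · -- between: c > b, cardinality preserved
        have hbc : b < c := gap c hbet.1 hbet.2
        have hset : (Finset.univ.filter (fun j : Fin n => j < c ∧ v'.symm c < v'.symm j)) =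
            insert a ((Finset.univ.filter
              (fun j : Fin n => j < c ∧ v.symm c < v.symm j)).erase b) := by
          ext j
          simp only [Finset.mem_insert, Finset.mem_erase, Finset.mem_filter, Finset.mem_univ,
            true_and, hpos', hfix]
          constructor
          · rintro ⟨hjc, hlt⟩
            by_cases hja : j = a
            · exact Or.inl hja
            · right
              by_cases hjb : j = b
              · subst hjb
                rw [hsb] at hlt
                exact absurd hlt (not_lt.mpr (le_of_lt hbet.1))
              · rw [hswapfix j hja hjb] at hlt
                exact ⟨hjb, hjc, hlt⟩
          · rintro (rfl | ⟨hjb, hjc, hlt⟩)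
            · refine ⟨lt_trans hab hbc, ?_⟩
              rw [hsa]
              exact hbet.2
            · by_cases hja : j = a
              · subst hja
                rw [← hi] at hlt
                exact absurd hlt (not_lt.mpr (le_of_lt hbet.1))
              · rw [hswapfix j hja hjb]
                exact ⟨hjc, hlt⟩
        rw [hset, Finset.card_insert_of_notMem, Finset.card_erase_of_mem]
        · have hmem : b ∈ (Finset.univ.filter
              (fun j : Fin n => j < c ∧ v.symm c < v.symm j)) := by
            simp only [Finset.mem_filter, Finset.mem_univ, true_and]
            exact ⟨hbc, by rw [← hjp]; exact hbet.2⟩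
          have hpos := Finset.card_pos.mpr ⟨b, hmem⟩
          omega
        · simp only [Finset.mem_filter, Finset.mem_univ, true_and]
          exact ⟨hbc, by rw [← hjp]; exact hbet.2⟩
        · simp only [Finset.mem_erase, Finset.mem_filter, Finset.mem_univ, true_and, not_and]
          intro _ _
          rw [← hi]
          exact not_lt.mpr (le_of_lt hbet.1)
      · -- outside: sets are equal
        have hout : v.symm c < i ∨ jp < v.symm c := by
          rcases lt_trichotomy (v.symm c) i with h | h | h
          · exact Or.inl h
          · exact absurd h hpc1
          · rcases lt_trichotomy (v.symm c) jp with h' | h' | h'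
            · exact absurd ⟨h, h'⟩ hbet
            · exact absurd h' hpc2
            · exact Or.inr h'
        congr 1
        ext j
        simp only [Finset.mem_filter, Finset.mem_univ, true_and, hpos', hfix]
        have hiff : ∀ j : Fin n, (v.symm c < Equiv.swap i jp (v.symm j) ↔ v.symm c < v.symm j) := by
          intro j
          by_cases hja : j = a
          · subst hja
            rw [hsa, ← hi]
            rcases hout with h | h
            · constructor <;> intro _
              · exact h
              · exact lt_trans h hij
            · constructor <;> intro h'
              · exact absurd h' (not_lt.mpr (le_of_lt h))
              · exact absurd h' (not_lt.mpr (le_of_lt (lt_trans hij h)))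
          · by_cases hjb : j = b
            · subst hjb
              rw [hsb, ← hjp]
              rcases hout with h | h
              · constructor <;> intro _
                · exact lt_trans h hij
                · exact h
              · constructor <;> intro h'
                · exact absurd h' (not_lt.mpr (le_of_lt (lt_trans hij h)))
                · exact absurd h' (not_lt.mpr (le_of_lt h))
            · rw [hswapfix j hja hjb]
        rw [hiff j]

end Aux

/-- The middle order refines the weak order and is refined by the Bruhat order. -/
theorem middle_between_weak_and_bruhat (n : ℕ) (v w : Equiv.Perm (Fin n)) :
    (weakLe v w → midLe v w) ∧ (midLe v w → bruhatLe v w) := by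
  constructor
  · intro h
    induction h with
    | refl => exact fun i => le_refl _
    | tail _ hcov ih =>
      obtain ⟨i, hi, hasc, heq⟩ := hcov
      exact fun c => le_trans (ih c) (weak_step_mid i hi hasc heq c)
  · intro hm
    have main : ∀ k : ℕ, ∀ u : Equiv.Perm (Fin n), midLe u w →
        inversions w ≤ inversions u + k → bruhatLe u w := by
      intro k
      induction k with
      | zero =>
        intro u hmu hle
        have heq : ∀ b, invSeq u b = invSeq w b := by
          by_contra hc
          push_neg at hc
          obtain ⟨b, hb⟩ := hc
          have hstrict : invSeq u b < invSeq w b := lt_of_le_of_ne (hmu b) hb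
          have hsum : inversions u < inversions w := by
            rw [← sum_invSeq, ← sum_invSeq]
            exact Finset.sum_lt_sum (fun i _ => hmu i) ⟨b, Finset.mem_univ b, hstrict⟩
          omega
        rw [invSeq_inj heq]
        exact Relation.ReflTransGen.refl
      | succ k ih =>
        intro u hmu hle
        by_cases hall : ∀ b, invSeq u b = invSeq w b
        · rw [invSeq_inj hall]
          exact Relation.ReflTransGen.refl
        · push_neg at hall
          obtain ⟨b, hb⟩ := hall
          have hstrict : invSeq u b < invSeq w b := lt_of_le_of_ne (hmu b) hb
          have hbv : invSeq u b < (b : ℕ) := lt_of_lt_of_le hstrict (invSeq_le_val w b)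
          obtain ⟨u', ⟨i, j, hij, huij, hu'⟩, hcomp⟩ := step_lemma u b hbv
          have hinv : inversions u' = inversions u + 1 := by
            rw [← sum_invSeq, ← sum_invSeq]
            have : ∀ c ∈ Finset.univ, invSeq u' c = invSeq u c + (if c = b then 1 else 0) := by
              intro c _
              rw [hcomp c]
              by_cases h : c = b
              · subst h; simp
              · simp [h]
            rw [Finset.sum_congr rfl this, Finset.sum_add_distrib]
            simp
          have hmid' : midLe u' w := by
            intro c
            rw [hcomp c]
            by_cases h : c = b
            · rw [if_pos h, h]; omega
            · rw [if_neg h]; exact hmu c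
          exact Relation.ReflTransGen.head ⟨i, j, hij, huij, hu', hinv⟩
            (ih u' hmid' (by omega))
    exact main (inversions w) v hm (by omega)
end

section
/- When restricted to 132-avoiding permutations, the middle order on S_n coincides with the weak order: for 132-avoiding v, w ∈ S_n, v ≤ w in the middle order if and only if v ≤ w in the weak order. -/
/-- `w` avoids the pattern 132. -/
def Avoids132 {n : ℕ} (w : Equiv.Perm (Fin n)) : Prop :=
  ¬ ∃ i j k : Fin n, i < j ∧ j < k ∧ w i < w k ∧ w k < w j

/-!
Compare permutations through their value-indexed inversion sets. A weak-order cover adds exactly one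
inversion, and conversely, if `invSet v ⊆ invSet w` with `v ≠ w`, some ascent of `v` is an
inversion of `w` (otherwise `w⁻¹ ∘ v` would be strictly increasing, hence the identity), so the weak
order is inclusion of inversion sets. Since `invSeq w k` counts the inversions `(j, k)`, inclusion
implies the middle order. For a 132-avoiding `w`, the values `j` with `(j, k)` an inversion
form an initial segment of `Fin n`, so the inversion set is determined by the inversion sequence
and the middle order implies inclusion.
-/

open Finset

theorem Fin.strictMono_of_lt_of_val_eq_add_one {n : ℕ} {α : Type*} [Preorder α] {f : Fin n → α}
    (hf : ∀ i j : Fin n, (j : ℕ) = i + 1 → f i < f j) : StrictMono f := by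
  cases n with
  | zero => exact fun i => i.elim0
  | succ n => exact Fin.strictMono_iff_lt_succ.2 fun i => hf _ _ (by simp)

theorem Fin.mem_iff_val_lt_card_of_isLowerSet {n : ℕ} {s : Finset (Fin n)}
    (hs : IsLowerSet (s : Set (Fin n))) (j : Fin n) : j ∈ s ↔ (j : ℕ) < #s := by
  rcases hs.eq_univ_or_Iio with h | ⟨a, h⟩
  · rw [Finset.coe_eq_univ] at h
    simp [h]
  · rw [← Finset.coe_Iio, Finset.coe_inj] at h
    rw [h, mem_Iio, Fin.card_Iio, Fin.lt_def]

namespace Equiv.Perm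

variable {n : ℕ}

def invSet (u : Perm (Fin n)) : Finset (Fin n × Fin n) :=
  univ.filter fun p => p.1 < p.2 ∧ u.symm p.2 < u.symm p.1

@[simp]
theorem mem_invSet {u : Perm (Fin n)} {a b : Fin n} :
    (a, b) ∈ invSet u ↔ a < b ∧ u.symm b < u.symm a := by
  simp [invSet]

theorem invSeq_eq_card_filter_mem_invSet (u : Perm (Fin n)) (k : Fin n) :
    invSeq u k = #(univ.filter fun j => (j, k) ∈ invSet u) := by
  simp only [invSeq, mem_invSet]

theorem midLe_of_invSet_subset {v w : Perm (Fin n)} (h : invSet v ⊆ invSet w) : midLe v w := by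
  intro k
  simp only [invSeq_eq_card_filter_mem_invSet]
  exact card_le_card (monotone_filter_right _ fun _ _ hj => h hj)

theorem swap_apply_lt_swap_apply_iff_of_adjacent {i j x y : Fin n} (hij : (j : ℕ) = i + 1)
    (hxy : ¬(x = i ∧ y = j)) (hyx : ¬(y = i ∧ x = j)) :
    swap i j x < swap i j y ↔ x < y := by
  simp only [Fin.ext_iff, hij] at hxy hyx
  simp only [swap_apply_def, Fin.lt_def, Fin.ext_iff]
  split_ifs <;> omega

theorem invSet_mul_swap_of_adjacent {u : Perm (Fin n)} {i j : Fin n} (hij : (j : ℕ) = i + 1)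
    (hasc : u i < u j) : invSet (u * swap i j) = insert (u i, u j) (invSet u) := by
  have hlt : i < j := by simp [Fin.lt_def, hij]
  have hsymm (x : Fin n) : (u * swap i j).symm x = swap i j (u.symm x) := by simp [mul_def]
  ext ⟨a, b⟩
  by_cases hab : a = u i ∧ b = u j
  · obtain ⟨rfl, rfl⟩ := hab
    simp [hsymm, hasc, hlt]
  · have hab' : ¬(u.symm a = i ∧ u.symm b = j) := fun ⟨ha, hb⟩ =>
      hab ⟨by simp [← ha], by simp [← hb]⟩
    simp only [mem_invSet, mem_insert, Prod.mk.injEq, hab, false_or, hsymm]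
    refine and_congr_right fun hlt_ab => swap_apply_lt_swap_apply_iff_of_adjacent hij ?_ hab'
    rintro ⟨hb, ha⟩
    rw [← ha, ← hb, apply_symm_apply, apply_symm_apply] at hasc
    exact hasc.asymm hlt_ab

theorem invSet_subset_of_weakLe {v w : Perm (Fin n)} (h : weakLe v w) : invSet v ⊆ invSet w := by
  induction h with
  | refl => exact subset_rfl
  | tail _ hstep ih =>
    obtain ⟨i, hi, hasc, rfl⟩ := hstep
    rw [invSet_mul_swap_of_adjacent rfl hasc]
    exact ih.trans (subset_insert _ _)

theorem exists_ascent_mem_invSet_of_invSet_subset {v w : Perm (Fin n)}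
    (h : invSet v ⊆ invSet w) (hne : v ≠ w) :
    ∃ i j : Fin n, (j : ℕ) = i + 1 ∧ v i < v j ∧ (v i, v j) ∈ invSet w := by
  by_contra! hnone
  have hmono : StrictMono (w.symm ∘ v) := Fin.strictMono_of_lt_of_val_eq_add_one fun i j hij => by
    have hlt : i < j := by simp [Fin.lt_def, hij]
    rcases lt_or_gt_of_ne (v.injective.ne hlt.ne) with hasc | hdesc
    · have hle : w.symm (v i) ≤ w.symm (v j) := by simpa [hasc] using hnone i j hij hasc
      exact hle.lt_of_ne ((w.symm.injective.comp v.injective).ne hlt.ne)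
    · simpa using (mem_invSet.1 (h (mem_invSet.2 ⟨hdesc, by simpa⟩))).2
  exact hne <| ext fun x => by simpa using congrArg w hmono.apply_eq

theorem weakLe_of_invSet_subset {v w : Perm (Fin n)} (h : invSet v ⊆ invSet w) : weakLe v w := by
  by_cases hvw : v = w
  · exact hvw ▸ .refl
  obtain ⟨i, j, hij, hasc, hmem⟩ := exists_ascent_mem_invSet_of_invSet_subset h hvw
  obtain ⟨hi, rfl⟩ : ∃ hi : (i : ℕ) + 1 < n, j = ⟨i + 1, hi⟩ := ⟨hij ▸ j.isLt, Fin.ext hij⟩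
  have hstep := invSet_mul_swap_of_adjacent rfl hasc
  have hnew : (v i, v ⟨i + 1, hi⟩) ∉ invSet v := by simp [Fin.le_iff_val_le_val]
  have hdecr : #(invSet w \ invSet (v * swap i ⟨i + 1, hi⟩)) < #(invSet w \ invSet v) := by
    rw [hstep, sdiff_insert]
    exact card_erase_lt_of_mem (mem_sdiff.2 ⟨hmem, hnew⟩)
  exact .head ⟨i, hi, hasc, rfl⟩ (weakLe_of_invSet_subset (hstep ▸ insert_subset hmem h))
termination_by #(invSet w \ invSet v)

theorem isLowerSet_filter_mem_invSet {u : Perm (Fin n)} (hu : Avoids132 u) (k : Fin n) :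
    IsLowerSet ((univ.filter fun j => (j, k) ∈ invSet u : Finset (Fin n)) : Set (Fin n)) := by
  intro a b hba ha
  simp only [coe_filter, mem_univ, true_and, Set.mem_ofPred_eq, mem_invSet] at ha ⊢
  refine ⟨hba.trans_lt ha.1, not_le.1 fun hbk => ?_⟩
  rcases hba.lt_or_eq with hba | rfl
  · -- the values `b < a < k` would sit at positions `u⁻¹ b < u⁻¹ k < u⁻¹ a`
    have hpos : u.symm b < u.symm k := hbk.lt_of_ne (u.symm.injective.ne (hba.trans ha.1).ne)
    exact hu ⟨u.symm b, u.symm k, u.symm a, hpos, ha.2, by simpa using ⟨hba, ha.1⟩⟩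
  · exact (ha.2.trans_le hbk).false

theorem mem_invSet_iff_lt_invSeq {u : Perm (Fin n)} (hu : Avoids132 u) (j k : Fin n) :
    (j, k) ∈ invSet u ↔ (j : ℕ) < invSeq u k := by
  rw [invSeq_eq_card_filter_mem_invSet,
    ← Fin.mem_iff_val_lt_card_of_isLowerSet (isLowerSet_filter_mem_invSet hu k)]
  simp

theorem invSet_subset_of_midLe {v w : Perm (Fin n)} (hv : Avoids132 v) (hw : Avoids132 w)
    (h : midLe v w) : invSet v ⊆ invSet w := fun ⟨j, k⟩ hjk => by
  rw [mem_invSet_iff_lt_invSeq hv] at hjk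
  exact (mem_invSet_iff_lt_invSeq hw j k).2 (hjk.trans_le (h k))

end Equiv.Perm

/-- On 132-avoiding permutations, the middle order coincides with the weak order. -/
theorem middle_eq_weak_on_132_avoiders (n : ℕ) (v w : Equiv.Perm (Fin n))
    (hv : Avoids132 v) (hw : Avoids132 w) :
    midLe v w ↔ weakLe v w :=
  ⟨fun h => Equiv.Perm.weakLe_of_invSet_subset (Equiv.Perm.invSet_subset_of_midLe hv hw h),
    fun h => Equiv.Perm.midLe_of_invSet_subset (Equiv.Perm.invSet_subset_of_weakLe h)⟩
end

section
/- Let f(n,k) be the number of intervals [v,w] in the middle order P_n with inv(w) − inv(v) = k. Then f(1,0) = 1 and for n ≥ 2, f(n,k) = Σ_{h=0}^{n−1} (n−h)·f(n−1, k−h), with f(n,j) = 0 for j < 0. -/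
/-- `f n k` is the number of intervals of rank `k` in the middle order `P_n`
(with `f n k = 0` for `k < 0`). -/
noncomputable def f (n : ℕ) (k : ℤ) : ℕ :=
  Nat.card {p : Equiv.Perm (Fin n) × Equiv.Perm (Fin n) //
    midLe p.1 p.2 ∧ (inversions p.2 : ℤ) = (inversions p.1 : ℤ) + k}

/-! Erasing the letter `n` from `w ∈ S_{n+1}` leaves the first `n` entries of its inversion
sequence unchanged, while the last entry `I(w)_n = n - w⁻¹(n)` is arbitrary in `[0, n]`. Hence
`w ↦ (I(w)_n, w without n)` is a bijection `S_{n+1} ≃ [0, n] × S_n` that carries `P_{n+1}` to the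
product order `[0, n] × P_n` and adds `I(w)_n` to the inversion number. An interval of rank `k` in
`P_{n+1}` is therefore a pair `a ≤ b` in `[0, n]` together with an interval of rank `k - (b - a)`
in `P_n`, and exactly `n + 1 - h` pairs have `b - a = h`. -/

open Equiv Finset

variable {n : ℕ}

namespace Equiv.Perm

def eraseLast (σ : Perm (Fin (n + 1))) : Perm (Fin n) :=
  (finSuccAboveEquiv (Fin.last n)).trans
    ((σ.subtypeEquiv (p := (· ≠ Fin.last n)) (q := (· ≠ σ (Fin.last n)))
        fun _ => σ.injective.ne_iff.symm).trans
      (finSuccAboveEquiv (σ (Fin.last n))).symm)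

theorem succAbove_eraseLast (σ : Perm (Fin (n + 1))) (j : Fin n) :
    (σ (Fin.last n)).succAbove (σ.eraseLast j) = σ j.castSucc := by
  simp only [eraseLast, trans_apply, subtypeEquiv_apply, finSuccAboveEquiv_apply, Fin.succAbove_last]
  exact congrArg Subtype.val ((finSuccAboveEquiv _).apply_symm_apply _)

theorem injective_apply_last_eraseLast :
    Function.Injective fun σ : Perm (Fin (n + 1)) => (σ (Fin.last n), σ.eraseLast) := by
  intro σ τ h
  obtain ⟨hlast, herase⟩ := Prod.mk.inj h
  ext i
  induction i using Fin.lastCases with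
  | last => rw [hlast]
  | cast j => rw [← succAbove_eraseLast, ← succAbove_eraseLast, hlast, herase]

end Equiv.Perm

open Equiv.Perm

theorem invSeq_last (w : Perm (Fin (n + 1))) :
    invSeq w (Fin.last n) = n - w.symm (Fin.last n) := by
  calc invSeq w (Fin.last n) = #(Ioi (w.symm (Fin.last n))) := by
        refine card_equiv w.symm fun j => ?_
        simp only [mem_filter, mem_univ, true_and, mem_Ioi, Fin.lt_last_iff_ne_last]
        exact and_iff_right_of_imp fun h hj => h.ne' (by rw [hj])
    _ = n - w.symm (Fin.last n) := by simp

theorem invSeq_castSucc (w : Perm (Fin (n + 1))) (j : Fin n) :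
    invSeq w j.castSucc = invSeq (eraseLast w.symm).symm j := by
  simp only [invSeq, card_filter, Fin.sum_univ_castSucc, symm_symm, ← succAbove_eraseLast w.symm,
    Fin.castSucc_lt_castSucc_iff, Fin.succAbove_lt_succAbove_iff]
  simp [(Fin.castSucc_lt_last j).not_gt]

theorem inversions_eq_sum_invSeq (w : Perm (Fin n)) : inversions w = ∑ i, invSeq w i := by
  simp only [invSeq, card_filter, ← Fintype.sum_prod_type']
  rw [← card_filter, inversions]
  refine card_equiv (w.prodCongr w) fun p => ?_
  simp [and_comm]

/-- `w ↦ (I(w)_n, w with the letter n erased from its one-line notation)`. -/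
noncomputable def splitLast : Perm (Fin (n + 1)) ≃ Fin (n + 1) × Perm (Fin n) :=
  Equiv.ofBijective (fun w => (Fin.rev (w.symm (Fin.last n)), (eraseLast w.symm).symm)) <| by
    refine (Fintype.bijective_iff_injective_and_card _).2 ⟨fun v w h => ?_, ?_⟩
    · obtain ⟨hlast, herase⟩ := Prod.mk.inj h
      exact symm_bijective.injective <| injective_apply_last_eraseLast <|
        Prod.ext (Fin.rev_injective hlast) (symm_bijective.injective herase)
    · simp [Fintype.card_perm, Nat.factorial_succ]

theorem val_splitLast_fst (w : Perm (Fin (n + 1))) :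
    ((splitLast w).1 : ℕ) = invSeq w (Fin.last n) := by
  simp [splitLast, invSeq_last, Fin.val_rev]

theorem invSeq_splitLast_snd (w : Perm (Fin (n + 1))) (j : Fin n) :
    invSeq (splitLast w).2 j = invSeq w j.castSucc :=
  (invSeq_castSucc w j).symm

theorem midLe_iff_splitLast (v w : Perm (Fin (n + 1))) :
    midLe v w ↔ (splitLast v).1 ≤ (splitLast w).1 ∧ midLe (splitLast v).2 (splitLast w).2 := by
  simp only [midLe, Fin.forall_fin_succ', Fin.le_iff_val_le_val, val_splitLast_fst,
    invSeq_splitLast_snd, and_comm]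

theorem inversions_splitLast (w : Perm (Fin (n + 1))) :
    inversions w = inversions (splitLast w).2 + (splitLast w).1 := by
  simp only [inversions_eq_sum_invSeq, Fin.sum_univ_castSucc, invSeq_splitLast_snd,
    val_splitLast_fst]

theorem sum_range_sum_range_ite_le {M : Type*} [AddCommMonoid M] (N : ℕ) (F : ℕ → M) :
    ∑ a ∈ range N, ∑ b ∈ range N, (if a ≤ b then F (b - a) else 0) =
      ∑ h ∈ range N, (N - h) • F h := by
  have inner (a : ℕ) :
      ∑ b ∈ range N, (if a ≤ b then F (b - a) else 0) = ∑ h ∈ range (N - a), F h := by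
    rw [← sum_filter, range_eq_Ico, Ico_filter_le, max_eq_right (Nat.zero_le a),
      sum_Ico_eq_sum_range]
    simp_rw [Nat.add_sub_cancel_left]
  simp_rw [inner]
  rw [sum_comm' (t' := range N) (s' := fun h => range (N - h)) (by intros; simp; omega)]
  simp

theorem f_succ_eq_sum_ite (m : ℕ) (k : ℤ) :
    f (m + 1) k = ∑ a : Fin (m + 1), ∑ b : Fin (m + 1),
      if a ≤ b then f m (k - ((b - a : ℕ) : ℤ)) else 0 := by
  let Q (a b : Fin (m + 1)) (p : Perm (Fin m) × Perm (Fin m)) : Prop :=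
    midLe p.1 p.2 ∧ (inversions p.2 : ℤ) = inversions p.1 + (k - ((b - a : ℕ) : ℤ))
  have hsplit (p : Perm (Fin (m + 1)) × Perm (Fin (m + 1))) :
      (midLe p.1 p.2 ∧ (inversions p.2 : ℤ) = inversions p.1 + k) ↔
        (splitLast p.1).1 ≤ (splitLast p.2).1 ∧
          Q (splitLast p.1).1 (splitLast p.2).1 ((splitLast p.1).2, (splitLast p.2).2) := by
    simp only [Q, midLe_iff_splitLast, inversions_splitLast, Fin.le_iff_val_le_val]
    constructor
    · rintro ⟨⟨hle, hmid⟩, hinv⟩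
      exact ⟨hle, hmid, by omega⟩
    · rintro ⟨hle, hmid, hinv⟩
      exact ⟨⟨hle, hmid⟩, by omega⟩
  let e := ((splitLast (n := m)).prodCongr (splitLast (n := m))).trans (prodProdProdComm _ _ _ _)
  rw [f, Nat.card_congr ((e.subtypeEquiv hsplit).trans (subtypeProdEquivSigmaSubtype
    fun (ab : Fin (m + 1) × Fin (m + 1)) p => ab.1 ≤ ab.2 ∧ Q ab.1 ab.2 p)),
    Nat.card_sigma, Fintype.sum_prod_type]
  refine sum_congr rfl fun a _ => sum_congr rfl fun b _ => ?_
  split_ifs with hab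
  · exact Nat.card_congr (subtypeEquivRight fun p => and_iff_right hab)
  · have : IsEmpty {p // a ≤ b ∧ Q a b p} := ⟨fun p => hab p.2.1⟩
    exact Nat.card_of_isEmpty

theorem f_succ (m : ℕ) (k : ℤ) :
    f (m + 1) k = ∑ h ∈ range (m + 1), (m + 1 - h) * f m (k - h) := by
  simp_rw [← smul_eq_mul, ← sum_range_sum_range_ite_le, sum_range, Fin.val_fin_le]
  exact f_succ_eq_sum_ite m k

theorem f_zero_zero : f 0 0 = 1 :=
  Nat.card_eq_one_iff_exists.2
    ⟨⟨(1, 1), fun i => i.elim0, by simp⟩, fun _ => Subtype.ext (Subsingleton.elim _ _)⟩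

/-- Recursion for the rank-refined count of intervals in the middle order. -/
theorem middle_order_intervals_by_rank :
    f 1 0 = 1 ∧
    ∀ n : ℕ, 2 ≤ n → ∀ k : ℤ,
      f n k = ∑ h ∈ Finset.range n, (n - h) * f (n - 1) (k - (h : ℤ)) := by
  refine ⟨by simpa [f_zero_zero] using f_succ 0 0, fun n _ k => ?_⟩
  obtain ⟨m, rfl⟩ : ∃ m, n = m + 1 := ⟨n - 1, by omega⟩
  simpa using f_succ m k
end

section
/- An interval [v,w] in the middle order P_n is isomorphic to a boolean lattice if and only if I(w)_i ∈ {I(v)_i, I(v)_i + 1} for all i; in that case its rank equals the number of indices i with I(w)_i = I(v)_i + 1, and hence the rank of any boolean interval in P_n is at most n−1. -/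
namespace MidAux
open Finset
variable {n : ℕ}

lemma invSeq_le (w : Equiv.Perm (Fin n)) (i : Fin n) : invSeq w i ≤ i := by
  unfold invSeq
  calc (Finset.univ.filter (fun j : Fin n => j < i ∧ w.symm i < w.symm j)).card
      ≤ (Finset.Iio i).card := by
        apply card_le_card; intro j hj
        simp only [mem_filter, mem_univ, true_and] at hj
        simpa using hj.1
    _ = i := by rw [Fin.card_Iio]

lemma invSeq_zero (w : Equiv.Perm (Fin n)) (i : Fin n) (hi : i.val = 0) : invSeq w i = 0 := by
  have := invSeq_le w i
  omega

lemma key (w : Equiv.Perm (Fin n)) (i : Fin n) :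
    invSeq w i + (Finset.univ.filter (fun j : Fin n => i < j ∧ w.symm i < w.symm j)).card
      + ((w.symm i : ℕ) + 1) = n := by
  set σ := w.symm with hσ
  have h1 : (Finset.univ.filter (fun j : Fin n => σ i < σ j))
      = (Finset.univ.filter (fun j : Fin n => j < i ∧ σ i < σ j))
        ∪ (Finset.univ.filter (fun j : Fin n => i < j ∧ σ i < σ j)) := by
    ext j
    simp only [mem_filter, mem_union, mem_univ, true_and]
    constructor
    · intro h
      rcases lt_trichotomy j i with hj | rfl | hj
      · exact Or.inl ⟨hj, h⟩
      · exact absurd h (lt_irrefl _)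
      · exact Or.inr ⟨hj, h⟩
    · rintro (⟨_, h⟩ | ⟨_, h⟩) <;> exact h
  have hdis : Disjoint (Finset.univ.filter (fun j : Fin n => j < i ∧ σ i < σ j))
      (Finset.univ.filter (fun j : Fin n => i < j ∧ σ i < σ j)) := by
    rw [Finset.disjoint_left]
    intro j h1 h2
    simp only [mem_filter, mem_univ, true_and] at h1 h2
    exact absurd (h1.1.trans h2.1) (lt_irrefl _)
  have h2 : (Finset.univ.filter (fun j : Fin n => σ i < σ j)).card
      = (Finset.Ioi (σ i)).card := by
    rw [← Finset.card_image_of_injective (Finset.univ.filter (fun j : Fin n => σ i < σ j))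
      σ.injective]
    congr 1
    ext y
    simp only [mem_image, mem_filter, mem_univ, true_and, mem_Ioi]
    constructor
    · rintro ⟨j, hj, rfl⟩; exact hj
    · intro hy; exact ⟨σ.symm y, by simpa using hy, by simp⟩
  have h3 : (Finset.Ioi (σ i)).card = n - 1 - (σ i : ℕ) := Fin.card_Ioi _
  have h4 : (σ i : ℕ) < n := (σ i).isLt
  have h5 := Finset.card_union_of_disjoint hdis
  rw [← h1] at h5
  have : invSeq w i = (Finset.univ.filter (fun j : Fin n => j < i ∧ σ i < σ j)).card := rfl
  omega

lemma step (v w : Equiv.Perm (Fin n)) (i : Fin n) (hinv : invSeq v i = invSeq w i)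
    (hgt : ∀ j, i < j → v.symm j = w.symm j) (hle : v.symm i ≤ w.symm i) :
    v.symm i = w.symm i := by
  by_contra hne
  have hlt : v.symm i < w.symm i := lt_of_le_of_ne hle hne
  set σ := v.symm with hσ
  set τ := w.symm with hτ
  set Uv := Finset.univ.filter (fun j : Fin n => i < j ∧ σ i < σ j) with hUv
  set Uw := Finset.univ.filter (fun j : Fin n => i < j ∧ τ i < τ j) with hUw
  have hkv : invSeq v i + Uv.card + ((σ i : ℕ) + 1) = n := key v i
  have hkw : invSeq w i + Uw.card + ((τ i : ℕ) + 1) = n := key w i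
  have hsub : Uw ⊆ Uv := by
    intro j hj
    simp only [hUv, hUw, mem_filter, mem_univ, true_and] at hj ⊢
    refine ⟨hj.1, ?_⟩
    have := hgt j hj.1
    rw [← this] at hj
    exact lt_of_le_of_lt hle hj.2
  -- the index mapping to value τ i under σ
  set j0 : Fin n := v (τ i) with hj0
  have hσj0 : σ j0 = τ i := v.symm_apply_apply (τ i)
  have hj0lt : j0 < i := by
    rcases lt_trichotomy j0 i with h | h | h
    · exact h
    · exact absurd (h ▸ hσj0) (ne_of_lt hlt)
    · have h2 := hgt j0 h
      rw [hσ] at h2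
      have : τ j0 = τ i := h2 ▸ hσj0
      exact absurd (τ.injective this) (ne_of_gt h)
  have himg : (Uv \ Uw).image σ ⊆ (Finset.Ioc (σ i) (τ i)).erase (τ i) := by
    intro y hy
    simp only [mem_image, mem_sdiff, hUv, hUw, mem_filter, mem_univ, true_and] at hy
    obtain ⟨j, ⟨⟨hij, hσij⟩, hnot⟩, rfl⟩ := hy
    have hτj : τ j = σ j := (hgt j hij).symm
    have hle2 : σ j ≤ τ i := by
      by_contra hy
      exact hnot ⟨hij, by rw [hτj]; exact lt_of_not_ge hy⟩
    rw [mem_erase, mem_Ioc]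
    refine ⟨?_, hσij, hle2⟩
    intro hyy
    have : j = j0 := σ.injective (hyy.trans hσj0.symm)
    rw [this] at hij
    exact absurd (hj0lt.trans hij) (lt_irrefl _)
  have hcard1 : (Uv \ Uw).card = Uv.card - Uw.card := card_sdiff_of_subset hsub
  have hcardle : Uw.card ≤ Uv.card := card_le_card hsub
  have hcardimg : ((Uv \ Uw).image σ).card = Uv.card - Uw.card := by
    rw [Finset.card_image_of_injective _ σ.injective, hcard1]
  have hmem : τ i ∈ Finset.Ioc (σ i) (τ i) := by rw [mem_Ioc]; exact ⟨hlt, le_refl _⟩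
  have hIoc : (Finset.Ioc (σ i) (τ i)).card = (τ i : ℕ) - (σ i : ℕ) := Fin.card_Ioc _ _
  have herase : ((Finset.Ioc (σ i) (τ i)).erase (τ i)).card
      = (τ i : ℕ) - (σ i : ℕ) - 1 := by
    rw [Finset.card_erase_of_mem hmem, hIoc]
  have hfinal : Uv.card - Uw.card ≤ (τ i : ℕ) - (σ i : ℕ) - 1 := by
    rw [← hcardimg, ← herase]
    exact card_le_card himg
  have hvallt : (σ i : ℕ) < (τ i : ℕ) := hlt
  omega

lemma invSeq_injective (v w : Equiv.Perm (Fin n)) (h : ∀ i, invSeq v i = invSeq w i) :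
    v = w := by
  have H : ∀ k, ∀ i : Fin n, n - i.val ≤ k → v.symm i = w.symm i := by
    intro k
    induction k with
    | zero => intro i hi; exact absurd hi (by have := i.isLt; omega)
    | succ k ih =>
      intro i _
      have hgt : ∀ j, i < j → v.symm j = w.symm j := by
        intro j hj
        have h1 : i.val < j.val := hj
        exact ih j (by have := j.isLt; omega)
      rcases le_total (v.symm i) (w.symm i) with hle | hle
      · exact step v w i (h i) hgt hle
      · exact (step w v i (h i).symm (fun j hj => (hgt j hj).symm) hle).symm
  have hsymm : v.symm = w.symm := by
    ext i
    exact congrArg Fin.val (H n i (by omega))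
  have : v.symm.symm = w.symm.symm := by rw [hsymm]
  simpa using this

lemma invSeq_surjective (b : Fin n → ℕ) (hb : ∀ i, b i ≤ i) :
    ∃ w : Equiv.Perm (Fin n), ∀ i, invSeq w i = b i := by
  set Code : Equiv.Perm (Fin n) → (∀ i : Fin n, Fin (i.val + 1)) :=
    fun w i => ⟨invSeq w i, Nat.lt_succ_of_le (invSeq_le w i)⟩ with hCode
  have hinj : Function.Injective Code := by
    intro v w hvw
    apply invSeq_injective
    intro i
    exact congrArg Fin.val (congrFun hvw i)
  have hcard : Fintype.card (Equiv.Perm (Fin n)) = Fintype.card (∀ i : Fin n, Fin (i.val + 1)) := by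
    rw [Fintype.card_perm, Fintype.card_pi, Fintype.card_fin]
    simp only [Fintype.card_fin]
    rw [Fin.prod_univ_eq_prod_range (fun x => x + 1) n, Finset.prod_range_add_one_eq_factorial]
  have hbij : Function.Bijective Code :=
    (Fintype.bijective_iff_injective_and_card Code).2 ⟨hinj, hcard⟩
  obtain ⟨w, hw⟩ := hbij.2 (fun i => ⟨b i, Nat.lt_succ_of_le (hb i)⟩)
  exact ⟨w, fun i => congrArg Fin.val (congrFun hw i)⟩

/-- The set of coordinates where the inversion sequences differ by one. -/
def Dset (v w : Equiv.Perm (Fin n)) : Finset (Fin n) :=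
  Finset.univ.filter (fun i : Fin n => invSeq w i = invSeq v i + 1)

lemma booleanEquiv (v w : Equiv.Perm (Fin n)) (hvw : midLe v w)
    (hd : ∀ i, invSeq w i = invSeq v i ∨ invSeq w i = invSeq v i + 1) :
    ∃ e : {u : Equiv.Perm (Fin n) // midLe v u ∧ midLe u w} ≃ Finset (Fin (Dset v w).card),
      ∀ a b, midLe a.1 b.1 ↔ e a ⊆ e b := by
  classical
  set D := Dset v w with hD
  set ε := D.equivFin with hε
  set f : {u : Equiv.Perm (Fin n) // midLe v u ∧ midLe u w} → Finset (Fin D.card) :=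
    fun u => Finset.univ.filter
      (fun a : Fin D.card => invSeq u.1 ((ε.symm a : {x // x ∈ D}) : Fin n)
        = invSeq v ((ε.symm a : {x // x ∈ D}) : Fin n) + 1) with hf
  have hcoord : ∀ (u : {u : Equiv.Perm (Fin n) // midLe v u ∧ midLe u w}) (i : Fin n),
      invSeq u.1 i = invSeq v i ∨ invSeq u.1 i = invSeq v i + 1 := by
    intro u i
    have h1 := u.2.1 i
    have h2 := u.2.2 i
    rcases hd i with h | h <;> omega
  have hnotD : ∀ (u : {u : Equiv.Perm (Fin n) // midLe v u ∧ midLe u w}) (i : Fin n),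
      i ∉ D → invSeq u.1 i = invSeq v i := by
    intro u i hi
    simp only [hD, Dset, mem_filter, mem_univ, true_and] at hi
    have h1 := u.2.1 i
    have h2 := u.2.2 i
    rcases hd i with h | h
    · omega
    · exact absurd h hi
  have hmemf : ∀ (u : {u : Equiv.Perm (Fin n) // midLe v u ∧ midLe u w}) (i : Fin n) (hi : i ∈ D),
      (ε ⟨i, hi⟩ ∈ f u ↔ invSeq u.1 i = invSeq v i + 1) := by
    intro u i hi
    simp only [hf, mem_filter, mem_univ, true_and, Equiv.symm_apply_apply]
  have hbij : Function.Bijective f := by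
    constructor
    · intro u1 u2 h12
      apply Subtype.ext
      apply invSeq_injective
      intro i
      by_cases hi : i ∈ D
      · have e1 := hmemf u1 i hi
        have e2 := hmemf u2 i hi
        rw [h12] at e1
        have e3 : (invSeq u1.1 i = invSeq v i + 1) ↔ (invSeq u2.1 i = invSeq v i + 1) :=
          e1.symm.trans e2
        rcases hcoord u1 i with c1 | c1 <;> rcases hcoord u2 i with c2 | c2
        · omega
        · exfalso; have := e3.mpr c2; omega
        · exfalso; have := e3.mp c1; omega
        · omega
      · rw [hnotD u1 i hi, hnotD u2 i hi]
    · intro S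
      set b : Fin n → ℕ := fun i =>
        if h : i ∈ D then (if ε ⟨i, h⟩ ∈ S then invSeq v i + 1 else invSeq v i)
        else invSeq v i with hb
      have hble : ∀ i, invSeq v i ≤ b i ∧ b i ≤ invSeq w i := by
        intro i
        have hvwi := hvw i
        simp only [hb]
        split_ifs with h1 h2
        · have hiD : invSeq w i = invSeq v i + 1 := by
            simpa [hD, Dset] using h1
          omega
        · omega
        · omega
      obtain ⟨u, hu⟩ := invSeq_surjective b (fun i => (hble i).2.trans (invSeq_le w i))
      refine ⟨⟨u, fun i => hu i ▸ (hble i).1, fun i => hu i ▸ (hble i).2⟩, ?_⟩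
      ext a
      set i : {x // x ∈ D} := ε.symm a with hi
      have hiD : (i : Fin n) ∈ D := i.2
      have hεi : ε ⟨(i : Fin n), hiD⟩ = a := by
        have : (⟨(i : Fin n), hiD⟩ : {x // x ∈ D}) = i := Subtype.ext rfl
        rw [this, hi, Equiv.apply_symm_apply]
      simp only [hf, mem_filter, mem_univ, true_and, ← hi]
      rw [hu]
      simp only [hb]
      rw [dif_pos hiD, hεi]
      split_ifs with hS
      · exact iff_of_true rfl hS
      · exact iff_of_false (by omega) hS
  refine ⟨Equiv.ofBijective f hbij, ?_⟩
  intro a b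
  constructor
  · intro hab
    intro s hs
    simp only [Equiv.ofBijective_apply, hf, mem_filter, mem_univ, true_and] at hs ⊢
    set i : Fin n := ((ε.symm s : {x // x ∈ D}) : Fin n) with hi
    have hiD : i ∈ D := (ε.symm s).2
    simp only [hD, Dset, mem_filter, mem_univ, true_and] at hiD
    have h1 := hab i
    have h2 := b.2.2 i
    omega
  · intro hsub i
    by_cases hi : i ∈ D
    · rcases hcoord a i with c | c
      · have := a.2.1 i
        have := b.2.1 i
        omega
      · have hmem : ε ⟨i, hi⟩ ∈ f a := (hmemf a i hi).2 c
        have hmem2 : ε ⟨i, hi⟩ ∈ f b := hsub hmem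
        have := (hmemf b i hi).1 hmem2
        omega
    · rw [hnotD a i hi, hnotD b i hi]

lemma forward (v w : Equiv.Perm (Fin n)) (hvw : midLe v w) (k : ℕ)
    (e : {u : Equiv.Perm (Fin n) // midLe v u ∧ midLe u w} ≃ Finset (Fin k))
    (he : ∀ a b, midLe a.1 b.1 ↔ e a ⊆ e b) :
    ∀ i, invSeq w i = invSeq v i ∨ invSeq w i = invSeq v i + 1 := by
  classical
  by_contra hc
  push_neg at hc
  obtain ⟨i, h1, h2⟩ := hc
  have hge2 : invSeq v i + 2 ≤ invSeq w i := by have := hvw i; omega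
  obtain ⟨u2, hu2⟩ := invSeq_surjective
    (fun j => if j = i then invSeq v j + 1 else invSeq v j)
    (by
      intro j
      have hj1 := invSeq_le w j
      have hj2 := hvw j
      have hj3 := invSeq_le v j
      split_ifs with h
      · subst h; omega
      · omega)
  have hu2v : midLe v u2 := by
    intro j; rw [hu2]; split_ifs <;> omega
  have hu2w : midLe u2 w := by
    intro j; rw [hu2]; have := hvw j; split_ifs with h
    · subst h; omega
    · omega
  set uu : {u : Equiv.Perm (Fin n) // midLe v u ∧ midLe u w} := ⟨u2, hu2v, hu2w⟩ with huu
  set U : Finset (Fin k) := e uu with hU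
  set x := e.symm Uᶜ with hx
  have hexU : e x = Uᶜ := e.apply_symm_apply _
  obtain ⟨z1, hz1⟩ := invSeq_surjective (fun j => min (invSeq x.1 j) (invSeq u2 j))
    (fun j => le_trans (min_le_right _ _) (le_trans (hu2w j) (invSeq_le w j)))
  have hz1v : midLe v z1 := fun j => by
    rw [hz1]; exact le_min (x.2.1 j) (hu2v j)
  have hz1w : midLe z1 w := fun j => by
    rw [hz1]; exact le_trans (min_le_right _ _) (hu2w j)
  set zz1 : {u : Equiv.Perm (Fin n) // midLe v u ∧ midLe u w} := ⟨z1, hz1v, hz1w⟩ with hzz1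
  have hsub1 : e zz1 ⊆ Uᶜ := by
    rw [← hexU]; exact (he zz1 x).1 (fun j => by rw [hz1]; exact min_le_left _ _)
  have hsub2 : e zz1 ⊆ U := (he zz1 uu).1 (fun j => by rw [hz1]; exact min_le_right _ _)
  have hz1empty : e zz1 = ∅ := by
    rw [← Finset.subset_empty, ← Finset.inter_compl U]
    exact Finset.subset_inter hsub2 hsub1
  set vv : {u : Equiv.Perm (Fin n) // midLe v u ∧ midLe u w} := ⟨v, fun j => le_refl _, hvw⟩ with hvv
  have hvempty : e vv = ∅ := by
    rw [← Finset.subset_empty, ← hz1empty]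
    exact (he vv zz1).1 hz1v
  have hz1v' : zz1 = vv := e.injective (hz1empty.trans hvempty.symm)
  have hmin : ∀ j, min (invSeq x.1 j) (invSeq u2 j) = invSeq v j := by
    intro j
    have : z1 = v := congrArg Subtype.val hz1v'
    rw [← hz1 j, this]
  obtain ⟨z2, hz2⟩ := invSeq_surjective (fun j => max (invSeq x.1 j) (invSeq u2 j))
    (fun j => by
      have hxw := x.2.2 j
      exact le_trans (max_le hxw (hu2w j)) (invSeq_le w j))
  have hz2v : midLe v z2 := fun j => by
    rw [hz2]; exact le_trans (hu2v j) (le_max_right _ _)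
  have hz2w : midLe z2 w := fun j => by
    rw [hz2]; exact max_le (x.2.2 j) (hu2w j)
  set zz2 : {u : Equiv.Perm (Fin n) // midLe v u ∧ midLe u w} := ⟨z2, hz2v, hz2w⟩ with hzz2
  have hsup1 : Uᶜ ⊆ e zz2 := by
    rw [← hexU]; exact (he x zz2).1 (fun j => by rw [hz2]; exact le_max_left _ _)
  have hsup2 : U ⊆ e zz2 := (he uu zz2).1 (fun j => by rw [hz2]; exact le_max_right _ _)
  have hz2univ : e zz2 = Finset.univ := by
    apply Finset.eq_univ_of_forall
    intro s
    by_cases hs : s ∈ U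
    · exact hsup2 hs
    · exact hsup1 (Finset.mem_compl.2 hs)
  set ww : {u : Equiv.Perm (Fin n) // midLe v u ∧ midLe u w} := ⟨w, hvw, fun j => le_refl _⟩ with hww
  have hwuniv : e ww = Finset.univ := by
    apply Finset.eq_univ_of_forall
    intro s
    have : e zz2 ⊆ e ww := (he zz2 ww).1 hz2w
    rw [hz2univ] at this
    exact this (Finset.mem_univ s)
  have hz2w' : zz2 = ww := e.injective (hz2univ.trans hwuniv.symm)
  have hmax : ∀ j, max (invSeq x.1 j) (invSeq u2 j) = invSeq w j := by
    intro j
    have : z2 = w := congrArg Subtype.val hz2w'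
    rw [← hz2 j, this]
  have hmini := hmin i
  have hmaxi := hmax i
  rw [hu2 i, if_pos rfl] at hmini hmaxi
  omega

end MidAux

/-- Characterization of boolean intervals in the middle order: `[v,w]` is isomorphic to
a boolean lattice iff `I(w)_i ∈ {I(v)_i, I(v)_i + 1}` for all `i`; in that case the rank
is the number of coordinates where the difference is `1`, and is at most `n - 1`. -/
theorem middle_order_boolean_intervals (n : ℕ) (v w : Equiv.Perm (Fin n))
    (hvw : midLe v w) :
    ((∃ k : ℕ, ∃ e : {u : Equiv.Perm (Fin n) // midLe v u ∧ midLe u w} ≃ Finset (Fin k),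
        ∀ a b, midLe a.1 b.1 ↔ e a ⊆ e b) ↔
      (∀ i, invSeq w i = invSeq v i ∨ invSeq w i = invSeq v i + 1)) ∧
    (∀ (k : ℕ) (e : {u : Equiv.Perm (Fin n) // midLe v u ∧ midLe u w} ≃ Finset (Fin k)),
      (∀ a b, midLe a.1 b.1 ↔ e a ⊆ e b) →
        k = (Finset.univ.filter (fun i : Fin n => invSeq w i = invSeq v i + 1)).card ∧
        k ≤ n - 1) := by
  classical
  constructor
  · constructor
    · rintro ⟨k, e, he⟩
      exact MidAux.forward v w hvw k e he
    · intro hd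
      obtain ⟨e, he⟩ := MidAux.booleanEquiv v w hvw hd
      exact ⟨_, e, he⟩
  · intro k e he
    have hd := MidAux.forward v w hvw k e he
    obtain ⟨e', he'⟩ := MidAux.booleanEquiv v w hvw hd
    have hDcard : (Finset.univ.filter (fun i : Fin n => invSeq w i = invSeq v i + 1)).card
        = (MidAux.Dset v w).card := rfl
    have c1 : Fintype.card {u : Equiv.Perm (Fin n) // midLe v u ∧ midLe u w} = 2 ^ k := by
      rw [Fintype.card_congr e, Fintype.card_finset, Fintype.card_fin]
    have c2 : Fintype.card {u : Equiv.Perm (Fin n) // midLe v u ∧ midLe u w}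
        = 2 ^ (MidAux.Dset v w).card := by
      rw [Fintype.card_congr e', Fintype.card_finset, Fintype.card_fin]
    have hk : k = (MidAux.Dset v w).card :=
      Nat.pow_right_injective (by norm_num) (c1.symm.trans c2)
    refine ⟨by rw [hDcard, hk], ?_⟩
    rw [hk]
    rcases Nat.eq_zero_or_pos n with h0 | hpos
    · subst h0
      have : (MidAux.Dset v w).card ≤ Fintype.card (Fin 0) := Finset.card_le_univ _
      simpa using this
    · set i0 : Fin n := ⟨0, hpos⟩ with hi0
      have hsub : MidAux.Dset v w ⊆ Finset.univ.erase i0 := by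
        intro i hi
        simp only [MidAux.Dset, Finset.mem_filter, Finset.mem_univ, true_and] at hi
        rw [Finset.mem_erase]
        refine ⟨?_, Finset.mem_univ _⟩
        intro hii
        rw [MidAux.invSeq_zero w i (by rw [hii]), MidAux.invSeq_zero v i (by rw [hii])] at hi
        omega
      calc (MidAux.Dset v w).card ≤ (Finset.univ.erase i0).card := Finset.card_le_card hsub
        _ = n - 1 := by
          rw [Finset.card_erase_of_mem (Finset.mem_univ _), Finset.card_univ, Fintype.card_fin]
end

section
/- The total number of boolean intervals in the middle order P_n is the double factorial (2n−1)!! = 1·3·5···(2n−1). -/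
open Finset Function

section LehmerCode

variable {ι α β : Type*} [LinearOrder ι] [LinearOrder α] [LinearOrder β]
  {f : ι → α} {g : ι → β}

theorem lt_iff_lt_of_forall_lt_iff (hf : Injective f) (hg : Injective g) {a b : ι}
    (ha : ∀ j < a, (f a < f j ↔ g a < g j)) (hb : ∀ j < b, (f b < f j ↔ g b < g j)) :
    f a < f b ↔ g a < g b := by
  rcases lt_trichotomy a b with hab | rfl | hba
  · rw [← (hf.ne hab.ne).le_iff_lt, ← (hg.ne hab.ne).le_iff_lt, ← not_lt, ← not_lt,
      hb a hab]
  · simp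
  · exact ha b hba

variable [Fintype ι]

def lehmerCode (f : ι → α) (i : ι) : ℕ :=
  #{j | j < i ∧ f i < f j}

theorem invSeq_eq_lehmerCode {n : ℕ} (w : Equiv.Perm (Fin n)) :
    invSeq w = lehmerCode w.symm :=
  rfl

/-- Otherwise `j` drops out of the set counted by `lehmerCode f i` without anything taking its
place in the set counted by `lehmerCode g i`. -/
theorem lt_of_lehmerCode_apply_eq (hg : Injective g) {i : ι}
    (hcode : lehmerCode f i = lehmerCode g i)
    (hbelow : ∀ a < i, ∀ b < i, (f a < f b ↔ g a < g b)) {j : ι} (hj : j < i)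
    (hfj : f i < f j) : g i < g j := by
  by_contra hgj
  have hgji : g j < g i := (not_lt.mp hgj).lt_of_ne (hg.ne hj.ne)
  have hjA : j ∈ ({k | k < i ∧ f i < f k} : Finset ι) := by simp [hj, hfj]
  have hsub : ({k | k < i ∧ g i < g k} : Finset ι) ⊆
      ({k | k < i ∧ f i < f k} : Finset ι).erase j := by
    intro k hk
    simp only [mem_filter, mem_univ, true_and] at hk
    have hgjk : g j < g k := hgji.trans hk.2
    simp only [mem_erase, mem_filter, mem_univ, true_and]
    exact ⟨fun hkj => hgjk.ne (congrArg g hkj).symm, hk.1,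
      hfj.trans ((hbelow j hj k hk.1).mpr hgjk)⟩
  exact ((card_le_card hsub).trans_lt (card_erase_lt_of_mem hjA)).ne hcode.symm

theorem lt_iff_lt_of_lehmerCode_apply_eq (hf : Injective f) (hg : Injective g) {i : ι}
    (hcode : lehmerCode f i = lehmerCode g i)
    (hbelow : ∀ a < i, ∀ b < i, (f a < f b ↔ g a < g b)) {j : ι} (hj : j < i) :
    f i < f j ↔ g i < g j :=
  ⟨lt_of_lehmerCode_apply_eq hg hcode hbelow hj,
    lt_of_lehmerCode_apply_eq hf hcode.symm (fun a ha b hb => (hbelow a ha b hb).symm) hj⟩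

theorem lt_iff_lt_of_lehmerCode_eq (hf : Injective f) (hg : Injective g)
    (hcode : lehmerCode f = lehmerCode g) (a b : ι) : f a < f b ↔ g a < g b := by
  have key : ∀ i, ∀ j < i, (f i < f j ↔ g i < g j) := by
    intro i
    induction i using WellFoundedLT.induction with
    | _ i ih =>
      exact fun j hj => lt_iff_lt_of_lehmerCode_apply_eq hf hg (congrFun hcode i)
        (fun a ha b hb => lt_iff_lt_of_forall_lt_iff hf hg (ih a ha) (ih b hb)) hj
  exact lt_iff_lt_of_forall_lt_iff hf hg (key a) (key b)

theorem Equiv.Perm.lehmerCode_injective :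
    Injective fun σ : Equiv.Perm ι => lehmerCode ⇑σ := by
  intro σ τ h
  have hmono : StrictMono (τ ∘ σ.symm) := fun a b hab =>
    (lt_iff_lt_of_lehmerCode_eq σ.injective τ.injective h _ _).mp (by simpa using hab)
  ext x
  simpa using (congrFun hmono.eq_id (σ x)).symm

end LehmerCode

theorem invSeq_lt {n : ℕ} (w : Equiv.Perm (Fin n)) (i : Fin n) : invSeq w i < i + 1 := by
  have hsub : ({j | j < i ∧ w.symm i < w.symm j} : Finset (Fin n)) ⊆ Iio i := fun j hj => by
    simp only [mem_filter, mem_univ, true_and] at hj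
    exact mem_Iio.mpr hj.1
  have := card_le_card hsub
  rw [Fin.card_Iio] at this
  exact Nat.lt_succ_of_le this

noncomputable def invSeqEquiv {n : ℕ} : Equiv.Perm (Fin n) ≃ ∀ i : Fin n, Fin (i + 1) :=
  Equiv.ofBijective (fun w i => ⟨invSeq w i, invSeq_lt w i⟩) <| by
    rw [Fintype.bijective_iff_injective_and_card, Fintype.card_perm, Fintype.card_pi]
    refine ⟨fun v w h => ?_, ?_⟩
    · have hcode : lehmerCode ⇑v.symm = lehmerCode ⇑w.symm := by
        simp only [← invSeq_eq_lehmerCode]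
        exact funext fun i => congrArg Fin.val (congrFun h i)
      exact Equiv.symm_bijective.injective (Equiv.Perm.lehmerCode_injective hcode)
    · simp only [Fintype.card_fin]
      rw [Fin.prod_univ_eq_prod_range (· + 1), prod_range_add_one_eq_factorial]

theorem card_pairs_related_pointwise {ι : Type*} [Fintype ι] {β : ι → Type*}
    (r : ∀ i, β i → β i → Prop) :
    Nat.card {p : (∀ i, β i) × (∀ i, β i) // ∀ i, r i (p.1 i) (p.2 i)} =
      ∏ i, Nat.card {q : β i × β i // r i q.1 q.2} := by
  rw [← Nat.card_pi]
  exact Nat.card_congr ((Equiv.subtypeEquiv (Equiv.arrowProdEquivProdArrow ι β β).symm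
    fun _ => Iff.rfl).trans (Equiv.subtypePiEquivPi (p := fun i q => r i q.1 q.2)))

theorem card_fin_pairs_le_le_add_one (m : ℕ) :
    Nat.card {q : Fin (m + 1) × Fin (m + 1) // (q.1 : ℕ) ≤ q.2 ∧ (q.2 : ℕ) ≤ q.1 + 1} =
      2 * m + 1 := by
  rw [← Nat.card_fin (2 * m + 1)]
  refine Nat.card_congr
    { toFun := fun q => ⟨q.1.1 + q.1.2, by omega⟩
      invFun := fun k =>
        ⟨(⟨k / 2, by omega⟩, ⟨(k + 1) / 2, by omega⟩), by simp only; omega⟩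
      left_inv := ?_
      right_inv := fun k => Fin.ext (by simp only; omega) }
  rintro ⟨⟨a, b⟩, hab⟩
  simp only at hab
  ext <;> simp only <;> omega

/-- The number of boolean intervals in the middle order `P_n` is the double factorial
`(2n-1)!! = 1·3·5⋯(2n-1)`. -/
theorem middle_order_boolean_interval_count (n : ℕ) :
    Nat.card {p : Equiv.Perm (Fin n) × Equiv.Perm (Fin n) //
        midLe p.1 p.2 ∧ ∀ i, invSeq p.2 i ≤ invSeq p.1 i + 1} =
      ∏ i ∈ Finset.range n, (2 * i + 1) := by
  have hcodes : Nat.card {p : Equiv.Perm (Fin n) × Equiv.Perm (Fin n) //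
        midLe p.1 p.2 ∧ ∀ i, invSeq p.2 i ≤ invSeq p.1 i + 1} =
      Nat.card {p : (∀ i : Fin n, Fin (i + 1)) × (∀ i : Fin n, Fin (i + 1)) //
        ∀ i, (p.1 i : ℕ) ≤ p.2 i ∧ (p.2 i : ℕ) ≤ p.1 i + 1} :=
    Nat.card_congr <|
      Equiv.subtypeEquiv (invSeqEquiv.prodCongr invSeqEquiv) fun _ => forall_and.symm
  rw [hcodes, card_pairs_related_pointwise
      (fun (i : Fin n) (a b : Fin (i + 1)) => (a : ℕ) ≤ b ∧ (b : ℕ) ≤ a + 1),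
    ← Fin.prod_univ_eq_prod_range]
  exact prod_congr rfl fun i _ => card_fin_pairs_le_le_add_one i
end
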